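/- arXiv:2003.00331 — 4 statements merged into one kernel-verified Lean document; each statement's English description precedes it below -/
import Mathlib

section
/- Theorem 1 (dependency service invariant): Fix f ∈ ℕ and a finite set D of 2f+1 dependency service nodes. Suppose the dependency service produces a response deps_x = ⋃_{d ∈ Q_x} deps_d(v_x) for vertex v_x via a quorum Q_x ⊆ D with |Q_x| ≥ f+1 and v_x ∈ P_d for every d ∈ Q_x, and similarly a response deps_y via a quorum Q_y for a distinct vertex v_y. If the commands cmd(v_x) and cmd(v_y) conflict, then v_x ∈ deps_y or v_y ∈ deps_x (or both). -/
/-!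
Two quorums of size `f + 1` inside `2f + 1` nodes share a node `d`. That node has processed both
vertices and orders them totally, so whichever it received first is a conflicting predecessor of
the other at `d`, and therefore lies in the other's response.
-/

section PrecedingConflicts

variable {V : Type*}

/-- The dependencies `deps_d(v)` computed by a node that processed `P` in the order `lt`. -/
def precedingConflicts (P : Finset V) (lt conflicts : V → V → Prop) (v : V) : Set V :=
  {u | u ∈ P ∧ lt u v ∧ conflicts u v}

theorem mem_precedingConflicts_or_mem_precedingConflicts {P : Finset V}
    {lt conflicts : V → V → Prop} (htotal : ∀ u ∈ P, ∀ v ∈ P, u ≠ v → lt u v ∨ lt v u)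
    (hsymm : ∀ u v, conflicts u v → conflicts v u) {x y : V} (hx : x ∈ P) (hy : y ∈ P)
    (hne : x ≠ y) (hxy : conflicts x y) :
    x ∈ precedingConflicts P lt conflicts y ∨ y ∈ precedingConflicts P lt conflicts x :=
  (htotal x hx y hy hne).imp (fun h => ⟨hx, h, hxy⟩) (fun h => ⟨hy, h, hsymm x y hxy⟩)

end PrecedingConflicts

theorem dependency_service_invariant_general {N V C : Type*}
    (f : ℕ) (D : Finset N) (hD : D.card = 2 * f + 1)
    (cmd : V → C) (conflict : C → C → Prop)
    (hsymm : ∀ x y, conflict x y → conflict y x)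
    -- each node `d` has a set `P d` of processed vertices and a strict total
    -- order `lt d` on `P d` (the order in which it received them)
    (P : N → Finset V) (lt : N → V → V → Prop)
    (htotal : ∀ d, ∀ u ∈ P d, ∀ v ∈ P d, u ≠ v → lt d u v ∨ lt d v u)
    (vx vy : V) (hne : vx ≠ vy)
    (Qx Qy : Finset N) (hQxD : Qx ⊆ D) (hQyD : Qy ⊆ D)
    (hQx : f + 1 ≤ Qx.card) (hQy : f + 1 ≤ Qy.card)
    (hPx : ∀ d ∈ Qx, vx ∈ P d) (hPy : ∀ d ∈ Qy, vy ∈ P d)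
    (depsx depsy : Set V)
    (hdx : depsx = ⋃ d ∈ Qx, {u | u ∈ P d ∧ lt d u vx ∧ conflict (cmd u) (cmd vx)})
    (hdy : depsy = ⋃ d ∈ Qy, {u | u ∈ P d ∧ lt d u vy ∧ conflict (cmd u) (cmd vy)})
    (hconf : conflict (cmd vx) (cmd vy)) :
    vx ∈ depsy ∨ vy ∈ depsx := by
  classical
  obtain ⟨d, hd⟩ := Finset.inter_nonempty_of_card_lt_card_add_card hQxD hQyD (by omega)
  obtain ⟨hdQx, hdQy⟩ := Finset.mem_inter.mp hd
  subst hdx hdy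
  rcases mem_precedingConflicts_or_mem_precedingConflicts (htotal d)
      (conflicts := fun u v => conflict (cmd u) (cmd v)) (fun _ _ => hsymm _ _)
      (hPx d hdQx) (hPy d hdQy) hne hconf with h | h
  · exact Or.inl (Set.mem_biUnion hdQy h)
  · exact Or.inr (Set.mem_biUnion hdQx h)

/-- Theorem 1 (dependency service invariant). If the dependency service
produces responses `depsx` and `depsy` for distinct vertices `vx` and `vy`
holding conflicting commands, then `vx ∈ depsy` or `vy ∈ depsx` (or both). -/
theorem dependency_service_invariant {N V C : Type*}
    (f : ℕ) (D : Finset N) (hD : D.card = 2 * f + 1)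
    (cmd : V → C) (conflict : C → C → Prop)
    (hsymm : ∀ x y, conflict x y → conflict y x)
    -- each node `d` has a set `P d` of processed vertices and a strict total
    -- order `lt d` on `P d` (the order in which it received them)
    (P : N → Finset V) (lt : N → V → V → Prop)
    (hirrefl : ∀ d, ∀ u ∈ P d, ¬ lt d u u)
    (htrans : ∀ d, ∀ u ∈ P d, ∀ v ∈ P d, ∀ w ∈ P d,
      lt d u v → lt d v w → lt d u w)
    (htotal : ∀ d, ∀ u ∈ P d, ∀ v ∈ P d, u ≠ v → lt d u v ∨ lt d v u)
    (vx vy : V) (hne : vx ≠ vy)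
    (Qx Qy : Finset N) (hQxD : Qx ⊆ D) (hQyD : Qy ⊆ D)
    (hQx : f + 1 ≤ Qx.card) (hQy : f + 1 ≤ Qy.card)
    (hPx : ∀ d ∈ Qx, vx ∈ P d) (hPy : ∀ d ∈ Qy, vy ∈ P d)
    (depsx depsy : Set V)
    (hdx : depsx = ⋃ d ∈ Qx, {u | u ∈ P d ∧ lt d u vx ∧ conflict (cmd u) (cmd vx)})
    (hdy : depsy = ⋃ d ∈ Qy, {u | u ∈ P d ∧ lt d u vy ∧ conflict (cmd u) (cmd vy)})
    (hconf : conflict (cmd vx) (cmd vy)) :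
    vx ∈ depsy ∨ vy ∈ depsx :=
  dependency_service_invariant_general f D hD cmd conflict hsymm P lt htotal vx vy hne Qx Qy hQxD
    hQyD hQx hQy hPx hPy depsx depsy hdx hdy hconf
end

section
/- Dependency invariant for chosen vertices (ChosenConflicts): Suppose that for every vertex v in some set Chosen ⊆ V, the chosen pair (x_v, deps(v)) is either the noop proposal (a command noop that conflicts with no command, with deps(v) = ∅) or a dependency-service response for v with command x_v = cmd(v), produced over 2f+1 dependency service nodes via a quorum of at least f+1 nodes. Then for any two distinct vertices v_x, v_y ∈ Chosen whose chosen commands conflict, either v_x ∈ deps(v_y) or v_y ∈ deps(v_x). -/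
/-!
Neither vertex can be a noop, since noop conflicts with nothing, so both hold dependency-service
responses. Two quorums of at least `f + 1` out of `2f + 1` nodes share a node `d`, which has
processed both vertices; as `d` orders them totally, whichever came second lists the other among
its dependencies at `d`, hence in its chosen dependencies.
-/

section NodeDeps

variable {N V C : Type*} (P : N → Finset V) (lt : N → V → V → Prop)
  (cmd : V → C) (conflict : C → C → Prop)

/-- The paper's `deps_d(v)`. -/
def nodeDeps (d : N) (v : V) : Set V :=
  {u | u ∈ P d ∧ lt d u v ∧ conflict (cmd u) (cmd v)}

variable {P lt cmd conflict}

theorem mem_nodeDeps_or_mem_nodeDeps (hsymm : ∀ x y, conflict x y → conflict y x) {d : N}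
    (htotal : ∀ u ∈ P d, ∀ v ∈ P d, u ≠ v → lt d u v ∨ lt d v u)
    {u v : V} (hu : u ∈ P d) (hv : v ∈ P d) (hne : u ≠ v) (hc : conflict (cmd u) (cmd v)) :
    u ∈ nodeDeps P lt cmd conflict d v ∨ v ∈ nodeDeps P lt cmd conflict d u :=
  (htotal u hu v hv hne).imp (fun h => ⟨hu, h, hc⟩) (fun h => ⟨hv, h, hsymm _ _ hc⟩)

end NodeDeps

theorem chosen_conflicts_general {N V C : Type*}
    (f : ℕ) (D : Finset N) (hD : D.card = 2 * f + 1)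
    (cmd : V → C) (conflict : C → C → Prop)
    (hsymm : ∀ x y, conflict x y → conflict y x)
    -- each node `d` has a set `P d` of processed vertices and a strict total
    -- order `lt d` on `P d` (the order in which it received them)
    (P : N → Finset V) (lt : N → V → V → Prop)
    (htotal : ∀ d, ∀ u ∈ P d, ∀ v ∈ P d, u ≠ v → lt d u v ∨ lt d v u)
    -- the noop command conflicts with no command
    (noop : C) (hnoop : ∀ c, ¬ conflict noop c)
    -- for each chosen vertex `v`, the chosen command `xcmd v` and chosen
    -- dependencies `deps v`
    (Chosen : Set V) (xcmd : V → C) (deps : V → Set V)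
    (hchosen : ∀ v ∈ Chosen,
      (xcmd v = noop ∧ deps v = ∅) ∨
      (xcmd v = cmd v ∧
        ∃ Q : Finset N, Q ⊆ D ∧ f + 1 ≤ Q.card ∧ (∀ d ∈ Q, v ∈ P d) ∧
          deps v = ⋃ d ∈ Q, {u | u ∈ P d ∧ lt d u v ∧ conflict (cmd u) (cmd v)})) :
    ∀ vx ∈ Chosen, ∀ vy ∈ Chosen, vx ≠ vy →
      conflict (xcmd vx) (xcmd vy) →
      vx ∈ deps vy ∨ vy ∈ deps vx := by
  classical
  intro vx hvx vy hvy hne hconf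
  obtain ⟨hx, -⟩ | ⟨hx, Qx, hQxD, hQxcard, hQxP, hdepsx⟩ := hchosen vx hvx
  · exact absurd hconf (hx ▸ hnoop _)
  obtain ⟨hy, -⟩ | ⟨hy, Qy, hQyD, hQycard, hQyP, hdepsy⟩ := hchosen vy hvy
  · exact absurd (hsymm _ _ hconf) (hy ▸ hnoop _)
  rw [hx, hy] at hconf
  obtain ⟨d, hd⟩ := Finset.inter_nonempty_of_card_lt_card_add_card hQxD hQyD (by omega)
  obtain ⟨hdx, hdy⟩ := Finset.mem_inter.mp hd
  rw [hdepsx, hdepsy]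
  exact (mem_nodeDeps_or_mem_nodeDeps hsymm (htotal d) (hQxP d hdx) (hQyP d hdy) hne
    hconf).imp (Set.mem_biUnion hdy) (Set.mem_biUnion hdx)

/-- Dependency invariant for chosen vertices (ChosenConflicts): if each chosen
vertex holds either the noop proposal (with empty dependencies) or a
dependency-service response for that vertex, then any two distinct chosen
vertices with conflicting chosen commands have at least one dependency edge
between them. -/
theorem chosen_conflicts {N V C : Type*}
    (f : ℕ) (D : Finset N) (hD : D.card = 2 * f + 1)
    (cmd : V → C) (conflict : C → C → Prop)
    (hsymm : ∀ x y, conflict x y → conflict y x)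
    -- each node `d` has a set `P d` of processed vertices and a strict total
    -- order `lt d` on `P d` (the order in which it received them)
    (P : N → Finset V) (lt : N → V → V → Prop)
    (hirrefl : ∀ d, ∀ u ∈ P d, ¬ lt d u u)
    (htrans : ∀ d, ∀ u ∈ P d, ∀ v ∈ P d, ∀ w ∈ P d,
      lt d u v → lt d v w → lt d u w)
    (htotal : ∀ d, ∀ u ∈ P d, ∀ v ∈ P d, u ≠ v → lt d u v ∨ lt d v u)
    -- the noop command conflicts with no command
    (noop : C) (hnoop : ∀ c, ¬ conflict noop c)
    -- for each chosen vertex `v`, the chosen command `xcmd v` and chosen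
    -- dependencies `deps v`
    (Chosen : Set V) (xcmd : V → C) (deps : V → Set V)
    (hchosen : ∀ v ∈ Chosen,
      (xcmd v = noop ∧ deps v = ∅) ∨
      (xcmd v = cmd v ∧
        ∃ Q : Finset N, Q ⊆ D ∧ f + 1 ≤ Q.card ∧ (∀ d ∈ Q, v ∈ P d) ∧
          deps v = ⋃ d ∈ Q, {u | u ∈ P d ∧ lt d u v ∧ conflict (cmd u) (cmd v)})) :
    ∀ vx ∈ Chosen, ∀ vy ∈ Chosen, vx ≠ vy →
      conflict (xcmd vx) (xcmd vy) →
      vx ∈ deps vy ∨ vy ∈ deps vx :=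
  chosen_conflicts_general f D hD cmd conflict hsymm P lt htotal noop hnoop Chosen xcmd deps hchosen
end

section
/- Permutations preserving the order of conflicting commands yield the same final state: Let S be a type of states, C a type of commands, exec : S → C → S a deterministic state machine, and conflict a symmetric relation on C such that any two non-conflicting commands commute, i.e., if ¬conflict(x, y) then exec (exec s x) y = exec (exec s y) x for every state s. Let V be a type of vertex ids with a function cmd : V → C, and let l1 and l2 be duplicate-free lists over V containing exactly the same elements. If for every pair of vertices u, v with conflict(cmd u, cmd v), u occurs before v in l1 exactly when u occurs before v in l2, then List.foldl (fun s v => exec s (cmd v)) s0 l1 = List.foldl (fun s v => exec s (cmd v)) s0 l2 for every initial state s0. -/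
/-!
Induct on `l1 = a :: t`. Every vertex that precedes `a` in `l2` follows it in `l1`, so it cannot
conflict with `a`; hence `a` commutes past all of them and can be executed first in `l2` as well.
Erasing `a` from both lists preserves the relative order of the remaining vertices, so the
induction hypothesis applies to `t` and `l2.erase a`.
-/

namespace List

variable {V : Type*} [DecidableEq V]

theorem idxOf_erase_lt_idxOf_erase_iff {a u v : V} (hu : u ≠ a) (hv : v ≠ a) (l : List V) :
    (l.erase a).idxOf u < (l.erase a).idxOf v ↔ l.idxOf u < l.idxOf v := by
  induction l with
  | nil => rfl
  | cons b l ih =>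
    simp only [erase_cons, idxOf_cons, beq_iff_eq, cond_eq_ite]
    split_ifs <;> simp_all

variable {S : Type*}

theorem foldl_eq_foldl_erase_of_commute {f : S → V → S} {a : V} {l : List V} (ha : a ∈ l)
    (hcomm : ∀ x ∈ l, l.idxOf x < l.idxOf a → ∀ s, f (f s x) a = f (f s a) x) (s : S) :
    l.foldl f s = (l.erase a).foldl f (f s a) := by
  induction l generalizing s with
  | nil => simp at ha
  | cons b l ih =>
    by_cases hba : b = a
    · subst hba
      simp
    · have hal : a ∈ l := (mem_cons.1 ha).resolve_left (Ne.symm hba)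
      have hcomm' : ∀ x ∈ l, l.idxOf x < l.idxOf a → ∀ s, f (f s x) a = f (f s a) x := by
        intro x hx hlt
        refine hcomm x (mem_cons_of_mem b hx) ?_
        by_cases hbx : b = x
        · subst hbx
          simp [idxOf_cons_ne l hba]
        · simpa [idxOf_cons_ne l hbx, idxOf_cons_ne l hba] using hlt
      have hba_comm := hcomm b mem_cons_self (by simp [idxOf_cons_ne l hba])
      rw [erase_cons_tail (by simpa using hba), foldl_cons, foldl_cons, ih hal hcomm', hba_comm]

theorem foldl_eq_of_perm_of_idxOf_lt_iff {f : S → V → S} {r : V → V → Prop}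
    (hcomm : ∀ x y, ¬ r x y → ∀ s, f (f s x) y = f (f s y) x)
    {l1 l2 : List V} (hnd : l1.Nodup) (hp : l1 ~ l2)
    (horder : ∀ u ∈ l1, ∀ v ∈ l1, r u v → (l1.idxOf u < l1.idxOf v ↔ l2.idxOf u < l2.idxOf v))
    (s : S) : l1.foldl f s = l2.foldl f s := by
  induction l1 generalizing l2 s with
  | nil => rw [hp.nil_eq]
  | cons a t ih =>
    obtain ⟨hat, hndt⟩ := nodup_cons.1 hnd
    have hne : ∀ x ∈ t, x ≠ a := fun x hx hxa => hat (hxa ▸ hx)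
    have hfront : ∀ x ∈ l2, l2.idxOf x < l2.idxOf a → ∀ s, f (f s x) a = f (f s a) x := by
      intro x hx hlt s
      have hxa : x ≠ a := by rintro rfl; exact lt_irrefl _ hlt
      -- `a` heads `l1` but follows `x` in `l2`, so the two cannot conflict
      refine (hcomm a x (fun hr => ?_) s).symm
      have := (horder a mem_cons_self x (hp.mem_iff.2 hx) hr).1 (by simp [idxOf_cons_ne t hxa.symm])
      omega
    rw [foldl_cons, foldl_eq_foldl_erase_of_commute (hp.subset mem_cons_self) hfront]
    refine ih hndt (by simpa using hp.erase a) (fun u hu v hv huv => ?_) _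
    have := horder u (mem_cons_of_mem a hu) v (mem_cons_of_mem a hv) huv
    rwa [← idxOf_erase_lt_idxOf_erase_iff (hne u hu) (hne v hv) (a :: t),
      ← idxOf_erase_lt_idxOf_erase_iff (hne u hu) (hne v hv) l2, erase_cons_head] at this

end List

theorem conflict_order_preserving_foldl_general {S C V : Type*} [DecidableEq V]
    (exec : S → C → S) (conflict : C → C → Prop)
    (hcomm : ∀ x y, ¬ conflict x y → ∀ s : S,
      exec (exec s x) y = exec (exec s y) x)
    (cmd : V → C) (l1 l2 : List V)
    (hnd1 : l1.Nodup) (hnd2 : l2.Nodup)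
    (hmem : ∀ v, v ∈ l1 ↔ v ∈ l2)
    (horder : ∀ u ∈ l1, ∀ v ∈ l1, conflict (cmd u) (cmd v) →
      (l1.idxOf u < l1.idxOf v ↔ l2.idxOf u < l2.idxOf v)) :
    ∀ s0 : S,
      List.foldl (fun s v => exec s (cmd v)) s0 l1 =
      List.foldl (fun s v => exec s (cmd v)) s0 l2 :=
  List.foldl_eq_of_perm_of_idxOf_lt_iff (r := fun u v => conflict (cmd u) (cmd v))
    (fun x y h => hcomm (cmd x) (cmd y) h) hnd1 ((List.perm_ext_iff_of_nodup hnd1 hnd2).2 hmem)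
    horder

/-- Permutations preserving the relative order of conflicting commands yield
the same final state. -/
theorem conflict_order_preserving_foldl {S C V : Type*} [DecidableEq V]
    (exec : S → C → S) (conflict : C → C → Prop)
    (hsymm : ∀ x y, conflict x y → conflict y x)
    (hcomm : ∀ x y, ¬ conflict x y → ∀ s : S,
      exec (exec s x) y = exec (exec s y) x)
    (cmd : V → C) (l1 l2 : List V)
    (hnd1 : l1.Nodup) (hnd2 : l2.Nodup)
    (hmem : ∀ v, v ∈ l1 ↔ v ∈ l2)
    (horder : ∀ u ∈ l1, ∀ v ∈ l1, conflict (cmd u) (cmd v) →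
      (l1.idxOf u < l1.idxOf v ↔ l2.idxOf u < l2.idxOf v)) :
    ∀ s0 : S,
      List.foldl (fun s v => exec s (cmd v)) s0 l1 =
      List.foldl (fun s v => exec s (cmd v)) s0 l2 :=
  conflict_order_preserving_foldl_general exec conflict hcomm cmd l1 l2 hnd1 hnd2 hmem horder
end

section
/- Replica agreement under the dependency invariant: Let V be a finite type of vertex ids, C a type of commands, cmd : V → C, and conflict a symmetric relation on C. Let exec : S → C → S be a state machine such that non-conflicting commands commute (¬conflict(x, y) implies exec (exec s x) y = exec (exec s y) x for all s). Let dep be a relation on V satisfying the dependency invariant: for all distinct u, v with conflict(cmd u, cmd v), dep u v or dep v u. Write a ~ b when a and b are mutually reachable via dep. Let L1 and L2 be strict linear orders on V such that (i) for all a, b, dep a b and ¬(a ~ b) imply b <_{Li} a for i = 1, 2, and (ii) L1 and L2 agree on every pair a, b with a ~ b. Then executing all vertices of V in the order L1 from initial state s0 (applying exec to cmd of each vertex in turn) yields the same final state as executing them in the order L2. -/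
/-!
Any two linear extensions of the same set of vertices differ by a sequence of swaps of
pairs that they order oppositely, so the two executions agree as soon as every such
inverted pair commutes. An inverted pair cannot be joined by a dependency edge: inside a
strongly connected component the two orders agree, and across components both orders
put the dependency first. By the dependency invariant the two commands therefore do not
conflict, hence commute.
-/

namespace List

variable {V S : Type*} {f : S → V → S}

theorem foldl_append_cons_of_commute {a : V} {p : List V}
    (h : ∀ x ∈ p, ∀ s, f (f s x) a = f (f s a) x) (q : List V) (s : S) :
    foldl f s (p ++ a :: q) = foldl f (f s a) (p ++ q) := by
  induction p generalizing s with
  | nil => rfl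
  | cons x p ih =>
    simp only [cons_append, foldl_cons]
    rw [ih (fun y hy => h y (mem_cons_of_mem x hy)), h x mem_cons_self]

theorem Perm.foldl_eq_of_commute_inversions {r₁ r₂ : V → V → Prop}
    (hcomm : ∀ u v, r₁ u v → r₂ v u → ∀ s, f (f s u) v = f (f s v) u)
    {l₁ l₂ : List V} (hp : l₁ ~ l₂) (h₁ : l₁.Pairwise r₁) (h₂ : l₂.Pairwise r₂) (s : S) :
    foldl f s l₁ = foldl f s l₂ := by
  induction l₁ generalizing l₂ s with
  | nil => rw [hp.nil_eq]
  | cons a t ih =>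
    obtain ⟨p, q, rfl⟩ := append_of_mem (hp.subset mem_cons_self)
    have ht : t ~ p ++ q := (hp.trans perm_middle).cons_inv
    obtain ⟨ha₁, ht₁⟩ := pairwise_cons.1 h₁
    have hp₂ : ∀ x ∈ p, r₂ x a := fun x hx =>
      (pairwise_append.1 h₂).2.2 x hx a mem_cons_self
    have hp₁ : ∀ x ∈ p, r₁ a x := fun x hx =>
      ha₁ x (ht.symm.subset (mem_append_left q hx))
    rw [foldl_cons, foldl_append_cons_of_commute
      (fun x hx s' => (hcomm a x (hp₁ x hx) (hp₂ x hx) s').symm)]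
    exact ih ht ht₁ (h₂.sublist ((sublist_cons_self a q).append_left p)) (f s a)

end List

theorem not_dep_of_inversion {V : Type*} {dep lt₁ lt₂ : V → V → Prop}
    [Std.Asymm lt₁] [Std.Asymm lt₂]
    (hcross : ∀ a b, dep a b →
      ¬ (Relation.ReflTransGen dep a b ∧ Relation.ReflTransGen dep b a) → lt₁ b a)
    (hagree : ∀ a b, (Relation.ReflTransGen dep a b ∧ Relation.ReflTransGen dep b a) →
      (lt₁ a b ↔ lt₂ a b))
    {u v : V} (h₁ : lt₁ u v) (h₂ : lt₂ v u) : ¬ dep u v := by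
  intro huv
  by_cases hscc : Relation.ReflTransGen dep u v ∧ Relation.ReflTransGen dep v u
  · exact asymm ((hagree u v hscc).1 h₁) h₂
  · exact asymm h₁ (hcross u v huv hscc)

theorem replica_agreement_general {V C S : Type*}
    (cmd : V → C) (conflict : C → C → Prop)
    (exec : S → C → S)
    (hcomm : ∀ x y, ¬ conflict x y → ∀ s : S,
      exec (exec s x) y = exec (exec s y) x)
    (dep : V → V → Prop)
    -- the dependency invariant
    (hdepinv : ∀ u v, u ≠ v → conflict (cmd u) (cmd v) → dep u v ∨ dep v u)
    (lt1 lt2 : V → V → Prop)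
    (h1 : IsStrictTotalOrder V lt1) (h2 : IsStrictTotalOrder V lt2)
    (hi1 : ∀ a b, dep a b →
      ¬ (Relation.ReflTransGen dep a b ∧ Relation.ReflTransGen dep b a) →
      lt1 b a)
    (hi2 : ∀ a b, dep a b →
      ¬ (Relation.ReflTransGen dep a b ∧ Relation.ReflTransGen dep b a) →
      lt2 b a)
    (hagree : ∀ a b,
      (Relation.ReflTransGen dep a b ∧ Relation.ReflTransGen dep b a) →
      (lt1 a b ↔ lt2 a b))
    -- `l1` and `l2` enumerate all vertices of `V` in the orders `lt1`, `lt2`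
    (l1 l2 : List V)
    (hmem1 : ∀ v, v ∈ l1) (hsort1 : l1.Pairwise lt1)
    (hmem2 : ∀ v, v ∈ l2) (hsort2 : l2.Pairwise lt2)
    (s0 : S) :
    List.foldl (fun s v => exec s (cmd v)) s0 l1 =
    List.foldl (fun s v => exec s (cmd v)) s0 l2 := by
  have hperm : l1.Perm l2 :=
    (List.perm_ext_iff_of_nodup hsort1.nodup hsort2.nodup).2 fun v => by simp [hmem1, hmem2]
  have hinv : ∀ u v, lt1 u v → lt2 v u → ¬ conflict (cmd u) (cmd v) := by
    intro u v hu hv hconf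
    rcases hdepinv u v (ne_of_irrefl hu) hconf with huv | hvu
    · exact not_dep_of_inversion hi1 hagree hu hv huv
    · exact not_dep_of_inversion hi2 (fun a b hab => (hagree a b hab).symm) hv hu hvu
  exact hperm.foldl_eq_of_commute_inversions
    (fun u v hu hv => hcomm (cmd u) (cmd v) (hinv u v hu hv)) hsort1 hsort2 s0

/-- Replica agreement under the dependency invariant: two replicas that execute
all vertices in strict linear orders respecting cross-component dependencies
and agreeing within strongly connected components reach the same final state. -/
theorem replica_agreement {V C S : Type*} [Fintype V]
    (cmd : V → C) (conflict : C → C → Prop)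
    (hsymm : ∀ x y, conflict x y → conflict y x)
    (exec : S → C → S)
    (hcomm : ∀ x y, ¬ conflict x y → ∀ s : S,
      exec (exec s x) y = exec (exec s y) x)
    (dep : V → V → Prop)
    -- the dependency invariant
    (hdepinv : ∀ u v, u ≠ v → conflict (cmd u) (cmd v) → dep u v ∨ dep v u)
    (lt1 lt2 : V → V → Prop)
    (h1 : IsStrictTotalOrder V lt1) (h2 : IsStrictTotalOrder V lt2)
    (hi1 : ∀ a b, dep a b →
      ¬ (Relation.ReflTransGen dep a b ∧ Relation.ReflTransGen dep b a) →
      lt1 b a)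
    (hi2 : ∀ a b, dep a b →
      ¬ (Relation.ReflTransGen dep a b ∧ Relation.ReflTransGen dep b a) →
      lt2 b a)
    (hagree : ∀ a b,
      (Relation.ReflTransGen dep a b ∧ Relation.ReflTransGen dep b a) →
      (lt1 a b ↔ lt2 a b))
    -- `l1` and `l2` enumerate all vertices of `V` in the orders `lt1`, `lt2`
    (l1 l2 : List V)
    (hmem1 : ∀ v, v ∈ l1) (hsort1 : l1.Pairwise lt1)
    (hmem2 : ∀ v, v ∈ l2) (hsort2 : l2.Pairwise lt2)
    (s0 : S) :
    List.foldl (fun s v => exec s (cmd v)) s0 l1 =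
    List.foldl (fun s v => exec s (cmd v)) s0 l2 :=
  replica_agreement_general cmd conflict exec hcomm dep hdepinv lt1 lt2 h1 h2 hi1 hi2 hagree l1 l2
    hmem1 hsort1 hmem2 hsort2 s0
end
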